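/- For every integer n ≥ 1, the graphs G_n and H_n are well-covered and vertex decomposable, with independence numbers α(G_n) = α(H_n) = n. -/

import Mathlib

/-!
With `x_i` labelled `i - 1`, `G_n` and `H_n` are the graphs on `{0, …, N - 1}`, `N = 3n - 1`
and `N = 3n - 2`, formed by the path `0 - 1 - 2 - ⋯` and the chords `{3k, 3k + 4}` and
`{3k + 2, 3k + 5}`.

Vertex decomposability and well-coveredness are proved together, along one recursion. If `v` is
a shedding vertex and `G ∖ v`, `G ∖ N[v]` are well-covered with independence numbers `k + 1` and
`k`, then `G` is well-covered with independence number `k + 1`: a maximal independent set of `G`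
is either a maximal independent set of `G ∖ v`, or `v` together with one of `G ∖ N[v]`. Adding
an isolated vertex preserves both properties and raises the independence number by one.
Shedding `3p + 2` or `3p + 4`, the recursion started at `{0, …, N - 1}` only meets initial
segments `{0, …, m - 1}` with `3 ∤ m` and initial segments with one vertex removed or added;
their independence numbers follow by induction on `p`.
-/

open SimpleGraph

variable {V : Type*} {W : Type*}

/-- The open neighborhood `N(x)` of a vertex, as a set. -/
def nbhd (G : SimpleGraph V) (x : V) : Set V := {u | G.Adj x u}

/-- The closed neighborhood `N[x]` of a vertex. -/
def closedNbhd (G : SimpleGraph V) (x : V) : Set V := insert x {u | G.Adj x u}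

/-- The degree of a vertex. -/
noncomputable def deg (G : SimpleGraph V) (x : V) : ℕ := (nbhd G x).ncard

/-- `S` is an independent set of vertices of `G`. -/
def IsIndep (G : SimpleGraph V) (S : Set V) : Prop :=
  ∀ u ∈ S, ∀ w ∈ S, ¬ G.Adj u w

/-- `S` is an independent set contained in `A`, i.e. an independent set of the
induced subgraph of `G` on `A`. -/
def IsIndepOn (G : SimpleGraph V) (A S : Set V) : Prop :=
  S ⊆ A ∧ IsIndep G S

/-- `S` is a maximal independent set of the induced subgraph of `G` on `A`. -/
def IsMaxIndepOn (G : SimpleGraph V) (A S : Set V) : Prop :=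
  IsIndepOn G A S ∧ ∀ T : Set V, IsIndepOn G A T → S ⊆ T → S = T

/-- A graph is well-covered if all its maximal independent sets have the same
cardinality. -/
def WellCovered (G : SimpleGraph V) : Prop :=
  ∀ S T : Set V, IsMaxIndepOn G Set.univ S → IsMaxIndepOn G Set.univ T →
    S.ncard = T.ncard

/-- The independence number `α(G)` of a graph. -/
noncomputable def indepNum (G : SimpleGraph V) : ℕ :=
  sSup {n : ℕ | ∃ S : Set V, IsIndep G S ∧ S.ncard = n}

/-- `VDOn G A` means: the induced subgraph of `G` on `A` is vertex decomposable,
via the recursive graph-theoretic characterization: it has no edges, or there is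
a vertex `v ∈ A` such that both `G∖v` and `G∖N[v]` (within `A`) are vertex
decomposable and no independent set of `G∖N[v]` is a maximal independent set
of `G∖v`. -/
inductive VDOn (G : SimpleGraph V) : Set V → Prop
  | no_edges (A : Set V) (h : ∀ u ∈ A, ∀ w ∈ A, ¬ G.Adj u w) : VDOn G A
  | step (A : Set V) (v : V) (hv : v ∈ A)
      (hdel : VDOn G (A \ {v}))
      (hlk : VDOn G (A \ closedNbhd G v))
      (hshed : ∀ S : Set V, IsIndepOn G (A \ closedNbhd G v) S →
        ¬ IsMaxIndepOn G (A \ {v}) S) : VDOn G A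

/-- A graph is vertex decomposable. -/
def VertexDecomposable (G : SimpleGraph V) : Prop := VDOn G Set.univ

/-- `c` lists the vertices of an `n`-cycle of `G` in cyclic order. -/
def IsCycleMap {n : ℕ} (G : SimpleGraph V) (c : ZMod n → V) : Prop :=
  Function.Injective c ∧ ∀ i : ZMod n, G.Adj (c i) (c (i + 1))

/-- A vertex is simplicial if its closed neighborhood induces a complete graph. -/
def IsSimplicial (G : SimpleGraph V) (x : V) : Prop :=
  ∀ u w : V, G.Adj x u → G.Adj x w → u ≠ w → G.Adj u w

/-- A basic 5-cycle: a 5-cycle containing no two adjacent vertices that both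
have degree at least 3 in `G`. -/
def IsBasic5Cycle (G : SimpleGraph V) (c : ZMod 5 → V) : Prop :=
  IsCycleMap G c ∧ ∀ i : ZMod 5, ¬(3 ≤ deg G (c i) ∧ 3 ≤ deg G (c (i + 1)))

/-- A basic 3-cycle: a 3-cycle containing at least one vertex of degree 2. -/
def IsBasic3Cycle (G : SimpleGraph V) (c : ZMod 3 → V) : Prop :=
  IsCycleMap G c ∧ ∃ i : ZMod 3, deg G (c i) = 2

/-- `x` belongs to a simplex of `G`, i.e. to the closed neighborhood of a
simplicial vertex. -/
def InSimplex (G : SimpleGraph V) (x : V) : Prop :=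
  ∃ v : V, IsSimplicial G v ∧ x ∈ closedNbhd G v

/-- `x` lies on a basic 5-cycle of `G`. -/
def OnBasic5Cycle (G : SimpleGraph V) (x : V) : Prop :=
  ∃ c : ZMod 5 → V, IsBasic5Cycle G c ∧ x ∈ Set.range c

/-- A basic 4-cycle, labelled so that `c 0` and `c 1` are two adjacent vertices
of degree two, and the remaining two vertices `c 2`, `c 3` each belong to a
simplex or to a basic 5-cycle of `G`.  The set `B(Q)` of such a labelled basic
4-cycle is `{c 0, c 1}`. -/
def IsBasic4Cycle (G : SimpleGraph V) (c : ZMod 4 → V) : Prop :=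
  IsCycleMap G c ∧ deg G (c 0) = 2 ∧ deg G (c 1) = 2 ∧
    (InSimplex G (c 2) ∨ OnBasic5Cycle G (c 2)) ∧
    (InSimplex G (c 3) ∨ OnBasic5Cycle G (c 3))

/-- The class `SQC`: the vertex set is partitioned by the closed neighborhoods
of `m` simplicial vertices, the vertex sets of `s` basic 5-cycles and the sets
`B(Q)` of `t` basic 4-cycles. -/
def InSQC (G : SimpleGraph V) : Prop :=
  ∃ (m s t : ℕ) (x : Fin m → V) (c : Fin s → ZMod 5 → V) (q : Fin t → ZMod 4 → V),
    (∀ i, IsSimplicial G (x i)) ∧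
    (∀ j, IsBasic5Cycle G (c j)) ∧
    (∀ k, IsBasic4Cycle G (q k)) ∧
    (∀ v : V, ∃! p : Fin m ⊕ Fin s ⊕ Fin t,
      match p with
      | Sum.inl i => v ∈ closedNbhd G (x i)
      | Sum.inr (Sum.inl j) => v ∈ Set.range (c j)
      | Sum.inr (Sum.inr k) => v = q k 0 ∨ v = q k 1)

/-- The class `SC`: the vertex set is partitioned by the closed neighborhoods
of `m` simplicial vertices and the vertex sets of `s` basic 5-cycles. -/
def InSC (G : SimpleGraph V) : Prop :=
  ∃ (m s : ℕ) (x : Fin m → V) (c : Fin s → ZMod 5 → V),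
    (∀ i, IsSimplicial G (x i)) ∧
    (∀ j, IsBasic5Cycle G (c j)) ∧
    (∀ v : V, ∃! p : Fin m ⊕ Fin s,
      match p with
      | Sum.inl i => v ∈ closedNbhd G (x i)
      | Sum.inr j => v ∈ Set.range (c j))

/-- `{u, w}` is a pendant edge of `G`: an edge incident with a vertex of
degree 1. -/
def PendantEdge (G : SimpleGraph V) (u w : V) : Prop :=
  G.Adj u w ∧ (deg G u = 1 ∨ deg G w = 1)

/-- `P(G)`: vertices incident with pendant edges. -/
def pendantVerts (G : SimpleGraph V) : Set V := {v | ∃ u, PendantEdge G v u}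

/-- `C(G)`: vertices lying on basic 5-cycles. -/
def basic5Verts (G : SimpleGraph V) : Set V := {v | OnBasic5Cycle G v}

/-- The class `PC`: `V(G) = P(G) ∪ C(G)` with `P(G) ∩ C(G) = ∅`, the basic
5-cycles partition `C(G)` (i.e. are pairwise vertex-disjoint), and the pendant
edges form a perfect matching of `P(G)`. -/
def InPC (G : SimpleGraph V) : Prop :=
  pendantVerts G ∪ basic5Verts G = Set.univ ∧
  pendantVerts G ∩ basic5Verts G = ∅ ∧
  (∀ c c' : ZMod 5 → V, IsBasic5Cycle G c → IsBasic5Cycle G c' →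
    Set.range c = Set.range c' ∨ Disjoint (Set.range c) (Set.range c')) ∧
  (∀ v ∈ pendantVerts G, ∃! u : V, PendantEdge G v u)

/-- The induced subgraph of `G` on `B` has no cut vertex: removing any vertex
of `B` leaves it (pre)connected. -/
def NoCutVertexOn (G : SimpleGraph V) (B : Set V) : Prop :=
  ∀ v ∈ B, (G.induce (B \ {v})).Preconnected

/-- `B` is (the vertex set of) a block of `G`: a maximal connected induced
subgraph without a cut vertex. -/
def IsBlockOf (G : SimpleGraph V) (B : Set V) : Prop :=
  B.Nonempty ∧ (G.induce B).Connected ∧ NoCutVertexOn G B ∧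
  ∀ B' : Set V, B ⊆ B' → (G.induce B').Connected → NoCutVertexOn G B' → B' = B

/-- The induced subgraph of `G` on `B` is complete. -/
def IsCompleteOn (G : SimpleGraph V) (B : Set V) : Prop :=
  ∀ u ∈ B, ∀ w ∈ B, u ≠ w → G.Adj u w

/-- The induced subgraph of `G` on `B` is a cycle. -/
def IsCycleOn (G : SimpleGraph V) (B : Set V) : Prop :=
  ∃ n : ℕ, 3 ≤ n ∧ ∃ c : ZMod n → V, Function.Injective c ∧ Set.range c = B ∧
    ∀ i j : ZMod n, G.Adj (c i) (c j) ↔ (j = i + 1 ∨ i = j + 1)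

/-- A block-cactus graph: every block is complete or a cycle. -/
def IsBlockCactus (G : SimpleGraph V) : Prop :=
  ∀ B : Set V, IsBlockOf G B → IsCompleteOn G B ∨ IsCycleOn G B

/-- A cactus graph: connected, and any two (distinct) cycles have at most one
vertex in common. -/
def IsCactus (G : SimpleGraph V) : Prop :=
  G.Connected ∧
  ∀ (n m : ℕ), 3 ≤ n → 3 ≤ m → ∀ (c : ZMod n → V) (c' : ZMod m → V),
    IsCycleMap G c → IsCycleMap G c' →
    Set.range c = Set.range c' ∨ (Set.range c ∩ Set.range c').Subsingleton

/-- `S` is a pendant edge of `G` incident with `v`. -/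
def IncidentPendant (G : SimpleGraph V) (v : V) (S : Set V) : Prop :=
  ∃ u, PendantEdge G v u ∧ S = {v, u}

/-- `S` is (the vertex set of) a basic 3-cycle of `G` through `v`. -/
def IncidentBasic3 (G : SimpleGraph V) (v : V) (S : Set V) : Prop :=
  ∃ c : ZMod 3 → V, IsBasic3Cycle G c ∧ Set.range c = S ∧ v ∈ S

/-- `S` is (the vertex set of) a basic 4-cycle of `G` through `v`. -/
def IncidentBasic4 (G : SimpleGraph V) (v : V) (S : Set V) : Prop :=
  ∃ c : ZMod 4 → V, IsBasic4Cycle G c ∧ Set.range c = S ∧ v ∈ S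

/-- `S` is (the vertex set of) a basic 5-cycle of `G` through `v`. -/
def IncidentBasic5 (G : SimpleGraph V) (v : V) (S : Set V) : Prop :=
  ∃ c : ZMod 5 → V, IsBasic5Cycle G c ∧ Set.range c = S ∧ v ∈ S

/-- `H` is a minor of `G`, witnessed by pairwise disjoint connected branch
sets. -/
def IsMinorOf (H : SimpleGraph W) (G : SimpleGraph V) : Prop :=
  ∃ f : W → Set V,
    (∀ w, (G.induce (f w)).Connected) ∧
    (∀ w w', w ≠ w' → Disjoint (f w) (f w')) ∧
    (∀ w w', H.Adj w w' → ∃ a ∈ f w, ∃ b ∈ f w', G.Adj a b)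

/-- Planarity, via Wagner's characterization: a graph is planar iff it has
neither `K₅` nor `K₃,₃` as a minor. -/
def IsPlanar (G : SimpleGraph V) : Prop :=
  ¬ IsMinorOf (⊤ : SimpleGraph (Fin 5)) G ∧
  ¬ IsMinorOf (completeBipartiteGraph (Fin 3) (Fin 3)) G

/-- The class `W₂`: a well-covered graph such that deleting any vertex leaves a
well-covered graph with the same independence number. -/
def InW2 (G : SimpleGraph V) : Prop :=
  WellCovered G ∧ ∀ x : V,
    WellCovered (G.induce ({x}ᶜ : Set V)) ∧
    _root_.indepNum (G.induce ({x}ᶜ : Set V)) = _root_.indepNum G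

/-- The edge relation of the graph `G_n`, on vertex labels `1, …, 3n-1`
(the vertex `x_i` has label `i`). -/
def gnRel (n : ℕ) (a b : ℕ) : Prop :=
  (a = 1 ∧ b = 2) ∨
  (∃ k : ℕ, 1 ≤ k ∧ k ≤ n - 1 ∧
    ((a = 3 * k - 1 ∧ b = 3 * k) ∨ (a = 3 * k ∧ b = 3 * k + 1) ∨
     (a = 3 * k + 1 ∧ b = 3 * k + 2) ∨ (a = 3 * k + 2 ∧ b = 3 * k - 2))) ∨
  (∃ l : ℕ, 2 ≤ l ∧ l ≤ n - 1 ∧ a = 3 * l - 3 ∧ b = 3 * l)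

/-- The graph `G_n`, with vertex set `{x_1, …, x_{3n-1}}`; the vertex `x_i` is
represented by the element of `Fin (3*n-1)` with value `i - 1`. -/
def Gn (n : ℕ) : SimpleGraph (Fin (3 * n - 1)) :=
  SimpleGraph.fromRel (fun a b => gnRel n (a.1 + 1) (b.1 + 1))

/-- The graph `H_n = G_n ∖ x_{3n-1}`, with vertex set `{x_1, …, x_{3n-2}}`;
the vertex `x_i` is represented by the element of `Fin (3*n-2)` with value
`i - 1`. -/
def Hn (n : ℕ) : SimpleGraph (Fin (3 * n - 2)) :=
  SimpleGraph.fromRel (fun a b => gnRel n (a.1 + 1) (b.1 + 1))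

open Set

section IndependentSets

variable {G : SimpleGraph V} {A B S T : Set V} {u v w : V}

lemma mem_closedNbhd_iff : u ∈ closedNbhd G v ↔ u = v ∨ G.Adj v u := Iff.rfl

lemma IsIndep.mono (hT : IsIndep G T) (hST : S ⊆ T) : IsIndep G S :=
  fun a ha b hb => hT a (hST ha) b (hST hb)

lemma IsIndep.insert (hS : IsIndep G S) (hw : ∀ z ∈ S, ¬ G.Adj w z) :
    IsIndep G (insert w S) := by
  rintro a (rfl | ha) b (rfl | hb) hab
  · exact G.irrefl hab
  · exact hw b hb hab
  · exact hw a ha hab.symm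
  · exact hS a ha b hb hab

lemma not_isMaxIndepOn_of_addable (hwB : w ∈ B) (hwS : w ∉ S) (hw : ∀ z ∈ S, ¬ G.Adj w z) :
    ¬ IsMaxIndepOn G B S := fun ⟨⟨hSB, hS⟩, hmax⟩ =>
  hwS <| (hmax _ ⟨insert_subset hwB hSB, hS.insert hw⟩ (subset_insert w S)) ▸ mem_insert w S

lemma IsMaxIndepOn.sdiff_singleton (h : IsMaxIndepOn G A S) (hv : v ∉ S) :
    IsMaxIndepOn G (A \ {v}) S :=
  ⟨⟨subset_sdiff_singleton h.1.1 hv, h.1.2⟩,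
    fun T hT hST => h.2 T ⟨hT.1.trans sdiff_subset, hT.2⟩ hST⟩

lemma IsMaxIndepOn.sdiff_closedNbhd (h : IsMaxIndepOn G A S) (hv : v ∈ S) :
    IsMaxIndepOn G (A \ closedNbhd G v) (S \ {v}) := by
  obtain ⟨⟨hSA, hS⟩, hmax⟩ := h
  refine ⟨⟨fun z ⟨hzS, hzv⟩ => ⟨hSA hzS, ?_⟩, hS.mono sdiff_subset⟩, fun T hT hST => ?_⟩
  · rintro (rfl | hvz)
    exacts [hzv rfl, hS v hv z hzS hvz]
  have hvT : v ∉ T := fun h => (hT.1 h).2 (mem_insert v _)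
  have hinsert : IsIndepOn G A (insert v T) :=
    ⟨insert_subset (hSA hv) fun z hz => (hT.1 hz).1,
      hT.2.insert fun z hz hvz => (hT.1 hz).2 (Or.inr hvz)⟩
  have hS_eq : S = insert v T :=
    hmax _ hinsert fun z hz => (eq_or_ne z v).elim (· ▸ mem_insert v T)
      fun hzv => mem_insert_of_mem v (hST ⟨hz, hzv⟩)
  rw [hS_eq, insert_sdiff_self_of_notMem hvT]

lemma IsMaxIndepOn.of_insert_isolated (h : IsMaxIndepOn G (insert w B) S) (hwB : w ∉ B)
    (hw : ∀ u ∈ B, ¬ G.Adj w u) : w ∈ S ∧ IsMaxIndepOn G B (S \ {w}) := by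
  have hwS : w ∈ S := by
    by_contra hwS
    refine not_isMaxIndepOn_of_addable (mem_insert w B) hwS (fun z hz => hw z ?_) h
    exact (h.1.1 hz).resolve_left fun hzw => hwS (hzw ▸ hz)
  have hB : insert w B \ closedNbhd G w = B := by
    rw [insert_sdiff_of_mem _ (show w ∈ closedNbhd G w from mem_insert w _), sdiff_eq_left,
      Set.disjoint_left]
    rintro u hu (rfl | hwu)
    exacts [hwB hu, hw u hu hwu]
  exact ⟨hwS, hB ▸ h.sdiff_closedNbhd hwS⟩

lemma exists_isMaxIndepOn_superset [Finite V] (hS : IsIndepOn G A S) :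
    ∃ T, S ⊆ T ∧ IsMaxIndepOn G A T := by
  obtain ⟨T, hST, hT⟩ := Finite.exists_le_maximal (p := fun T => IsIndepOn G A T ∧ S ⊆ T)
    ⟨hS, subset_rfl⟩
  exact ⟨T, hST, hT.1.1, fun T' hT' hTT' => hT.eq_of_le ⟨hT', hST.trans hTT'⟩ hTT'⟩

end IndependentSets

section Decompositions

variable {G : SimpleGraph V} {A B S : Set V} {a b u v w : V} {k : ℕ}

def IsSheddingOn (G : SimpleGraph V) (A : Set V) (v : V) : Prop :=
  ∀ S, IsIndepOn G (A \ closedNbhd G v) S → ¬ IsMaxIndepOn G (A \ {v}) S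

lemma isSheddingOn_of_forall_exists_addable
    (h : ∀ S, IsIndepOn G (A \ closedNbhd G v) S →
      ∃ w ∈ A, G.Adj v w ∧ ∀ z ∈ S, ¬ G.Adj w z) :
    IsSheddingOn G A v := fun S hS => by
  obtain ⟨w, hwA, hvw, hw⟩ := h S hS
  exact not_isMaxIndepOn_of_addable ⟨hwA, hvw.ne'⟩ (fun hwS => (hS.1 hwS).2 (Or.inr hvw)) hw

lemma isSheddingOn_of_nbhd_inter_subset (hu : u ∈ A) (hvu : G.Adj v u)
    (hdom : nbhd G u ∩ A ⊆ closedNbhd G v) : IsSheddingOn G A v :=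
  isSheddingOn_of_forall_exists_addable fun _ hS =>
    ⟨u, hu, hvu, fun _ hz huz => (hS.1 hz).2 (hdom ⟨huz, (hS.1 hz).1⟩)⟩

lemma notMem_closedNbhd_of_isolated (hv : v ∈ A) (hwA : w ∉ A) (hw : ∀ u ∈ A, ¬ G.Adj w u) :
    w ∉ closedNbhd G v := by
  rintro (rfl | hvw)
  exacts [hwA hv, hw v hv hvw.symm]

lemma IsSheddingOn.insert_of_isolated (h : IsSheddingOn G A v) (hv : v ∈ A) (hwA : w ∉ A)
    (hw : ∀ u ∈ A, ¬ G.Adj w u) : IsSheddingOn G (insert w A) v := by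
  have hwv : w ∉ closedNbhd G v := notMem_closedNbhd_of_isolated hv hwA hw
  have hwv' : w ∉ ({v} : Set V) := fun h => hwv (Or.inl h)
  intro S hS hmax
  rw [insert_sdiff_of_notMem _ hwv] at hS
  rw [insert_sdiff_of_notMem _ hwv'] at hmax
  obtain ⟨-, hmax'⟩ := hmax.of_insert_isolated (fun h => hwA h.1) fun u hu => hw u hu.1
  exact h _ ⟨fun z hz => (hS.1 hz.1).resolve_left hz.2, hS.2.mono sdiff_subset⟩ hmax'

lemma VDOn.insert_of_isolated (hA : VDOn G A) (hwA : w ∉ A) (hw : ∀ u ∈ A, ¬ G.Adj w u) :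
    VDOn G (insert w A) := by
  induction hA with
  | no_edges A hA => exact .no_edges _ (IsIndep.insert hA hw)
  | step A v hv _ _ hshed ihdel ihlk =>
    have hwv : w ∉ closedNbhd G v := notMem_closedNbhd_of_isolated hv hwA hw
    have hwv' : w ∉ ({v} : Set V) := fun h => hwv (Or.inl h)
    refine .step _ v (mem_insert_of_mem w hv) ?_ ?_
      (IsSheddingOn.insert_of_isolated hshed hv hwA hw)
    · rw [insert_sdiff_of_notMem _ hwv']
      exact ihdel (fun h => hwA h.1) fun u hu => hw u hu.1
    · rw [insert_sdiff_of_notMem _ hwv]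
      exact ihlk (fun h => hwA h.1) fun u hu => hw u hu.1

def WellCoveredOn (G : SimpleGraph V) (A : Set V) (k : ℕ) : Prop :=
  ∀ S, IsMaxIndepOn G A S → S.ncard = k

lemma wellCoveredOn_empty : WellCoveredOn G ∅ 0 := fun S hS => by
  rw [subset_empty_iff.mp hS.1.1, ncard_empty]

lemma WellCoveredOn.insert_of_isolated [Finite V] (h : WellCoveredOn G B k) (hwB : w ∉ B)
    (hw : ∀ u ∈ B, ¬ G.Adj w u) : WellCoveredOn G (insert w B) (k + 1) := fun S hS => by
  obtain ⟨hwS, hmax⟩ := hS.of_insert_isolated hwB hw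
  rw [← ncard_sdiff_singleton_add_one hwS, h _ hmax]

lemma WellCoveredOn.of_sdiff [Finite V] (hdel : WellCoveredOn G (A \ {v}) (k + 1))
    (hlk : WellCoveredOn G (A \ closedNbhd G v) k) : WellCoveredOn G A (k + 1) := by
  intro S hS
  by_cases hv : v ∈ S
  · rw [← ncard_sdiff_singleton_add_one hv, hlk _ (hS.sdiff_closedNbhd hv)]
  · exact hdel _ (hS.sdiff_singleton hv)

lemma WellCoveredOn.wellCovered (h : WellCoveredOn G univ k) : WellCovered G :=
  fun S T hS hT => (h S hS).trans (h T hT).symm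

lemma WellCoveredOn.indepNum_eq [Finite V] (h : WellCoveredOn G univ k) :
    _root_.indepNum G = k := by
  obtain ⟨T, -, hT⟩ := exists_isMaxIndepOn_superset (G := G) (A := univ) (S := ∅)
    ⟨empty_subset _, fun _ h => h.elim⟩
  refine IsGreatest.csSup_eq ⟨⟨T, hT.1.2, h T hT⟩, ?_⟩
  rintro _ ⟨S, hS, rfl⟩
  obtain ⟨T', hST', hT'⟩ := exists_isMaxIndepOn_superset ⟨subset_univ S, hS⟩
  exact h T' hT' ▸ ncard_le_ncard hST'

def VDWellCoveredOn (G : SimpleGraph V) (A : Set V) (k : ℕ) : Prop :=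
  VDOn G A ∧ WellCoveredOn G A k

namespace VDWellCoveredOn

lemma empty : VDWellCoveredOn G ∅ 0 :=
  ⟨.no_edges _ fun _ h => h.elim, wellCoveredOn_empty⟩

variable [Finite V]

lemma insert_of_isolated (h : VDWellCoveredOn G A k) (hwA : w ∉ A)
    (hw : ∀ u ∈ A, ¬ G.Adj w u) : VDWellCoveredOn G (insert w A) (k + 1) :=
  ⟨h.1.insert_of_isolated hwA hw, h.2.insert_of_isolated hwA hw⟩

lemma of_isSheddingOn (hv : v ∈ A) (hshed : IsSheddingOn G A v)
    (hdel : VDWellCoveredOn G (A \ {v}) (k + 1))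
    (hlk : VDWellCoveredOn G (A \ closedNbhd G v) k) : VDWellCoveredOn G A (k + 1) :=
  ⟨.step A v hv hdel.1 hlk.1 hshed, .of_sdiff hdel.2 hlk.2⟩

lemma singleton (a : V) : VDWellCoveredOn G {a} 1 := by
  simpa using (empty (G := G)).insert_of_isolated (notMem_empty a) fun _ h => h.elim

lemma pair (hab : G.Adj a b) : VDWellCoveredOn G {a, b} 1 := by
  have hdel : ({a, b} : Set V) \ {a} = {b} :=
    insert_sdiff_self_of_notMem fun h => G.ne_of_adj hab (mem_singleton_iff.mp h)
  have hlk : ({a, b} : Set V) \ closedNbhd G a = ∅ :=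
    sdiff_eq_empty.mpr (insert_subset (mem_insert a _) (singleton_subset_iff.mpr (Or.inr hab)))
  refine of_isSheddingOn (mem_insert a _) ?_ (by rw [hdel]; exact singleton b)
    (by rw [hlk]; exact empty)
  refine isSheddingOn_of_nbhd_inter_subset (mem_insert_of_mem a rfl) hab ?_
  rintro z ⟨hbz, rfl | rfl⟩
  exacts [mem_insert z _, (G.irrefl hbz).elim]

end VDWellCoveredOn

end Decompositions

/-- The edges of `G_n`, with `x_i` labelled `i - 1`. -/
def pathChordRel (u v : ℕ) : Prop :=
  v = u + 1 ∨ (u = v + 4 ∧ v % 3 = 0) ∨ (v = u + 3 ∧ u % 3 = 2)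

def pathChordGraph (N : ℕ) : SimpleGraph (Fin N) :=
  SimpleGraph.fromRel fun a b => pathChordRel a b

lemma gnRel_add_one_add_one_iff {n a b : ℕ} (ha : a + 2 ≤ 3 * n) (hb : b + 2 ≤ 3 * n) :
    gnRel n (a + 1) (b + 1) ↔ pathChordRel a b := by
  unfold gnRel pathChordRel
  constructor
  · rintro (h | ⟨k, -, -, h⟩ | ⟨l, -, -, h⟩) <;> omega
  · rintro (h | h | h)
    · rcases Nat.eq_zero_or_pos a with rfl | ha₀
      · left; omega
      · exact Or.inr (Or.inl ⟨(a + 2) / 3, by omega, by omega, by omega⟩)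
    · exact Or.inr (Or.inl ⟨b / 3 + 1, by omega, by omega, by omega⟩)
    · exact Or.inr (Or.inr ⟨(a + 4) / 3, by omega, by omega, by omega, by omega⟩)

lemma fromRel_gnRel_eq_pathChordGraph {n N : ℕ} (hN : N ≤ 3 * n - 1) :
    SimpleGraph.fromRel (fun a b : Fin N => gnRel n (a.1 + 1) (b.1 + 1)) = pathChordGraph N := by
  unfold pathChordGraph
  congr 1
  ext a b
  exact gnRel_add_one_add_one_iff (by have := a.isLt; omega) (by have := b.isLt; omega)

lemma Gn_eq_pathChordGraph (n : ℕ) : Gn n = pathChordGraph (3 * n - 1) :=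
  fromRel_gnRel_eq_pathChordGraph (by omega)

lemma Hn_eq_pathChordGraph (n : ℕ) : Hn n = pathChordGraph (3 * n - 2) :=
  fromRel_gnRel_eq_pathChordGraph (by omega)

section PathChordGraph

variable {N p : ℕ}

@[simp]
lemma pathChordGraph_adj {a b : Fin N} :
    (pathChordGraph N).Adj a b ↔ pathChordRel a b ∨ pathChordRel b a := by
  rw [pathChordGraph, fromRel_adj, and_iff_right_iff_imp]
  rintro h rfl
  unfold pathChordRel at h
  omega

lemma mem_closedNbhd_pathChordGraph {a b : Fin N} :
    b ∈ closedNbhd (pathChordGraph N) a ↔ b.1 = a.1 ∨ pathChordRel a b ∨ pathChordRel b a := by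
  rw [mem_closedNbhd_iff, pathChordGraph_adj, Fin.ext_iff]

lemma vdWellCoveredOn_lt_or_eq_three_mul
    (hb : VDWellCoveredOn (pathChordGraph N) {v | v.1 < 3 * p + 2} (p + 1))
    (hN : 3 * (p + 1) + 1 ≤ N) :
    VDWellCoveredOn (pathChordGraph N) {v | v.1 + 1 < 3 * (p + 1) ∨ v.1 = 3 * (p + 1)}
      (p + 1 + 1) := by
  have hset : {v : Fin N | v.1 + 1 < 3 * (p + 1) ∨ v.1 = 3 * (p + 1)} =
      insert ⟨3 * p + 3, by omega⟩ {v | v.1 < 3 * p + 2} := by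
    ext w
    simp only [mem_ofPred_eq, mem_insert_iff, Fin.ext_iff]
    omega
  rw [hset]
  refine hb.insert_of_isolated (by simp) fun u hu => ?_
  simp only [mem_ofPred_eq] at hu
  simp only [pathChordGraph_adj, pathChordRel]
  omega

lemma vdWellCoveredOn_lt_three_mul_add_one
    (hdel : VDWellCoveredOn (pathChordGraph N) {v | v.1 + 1 < 3 * (p + 1) ∨ v.1 = 3 * (p + 1)}
      (p + 1 + 1))
    (hlk : VDWellCoveredOn (pathChordGraph N) {v | v.1 + 1 < 3 * p ∨ v.1 = 3 * p} (p + 1))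
    (hN : 3 * (p + 1) + 1 ≤ N) :
    VDWellCoveredOn (pathChordGraph N) {v | v.1 < 3 * (p + 1) + 1} (p + 1 + 1) := by
  set c : Fin N := ⟨3 * p + 2, by omega⟩
  have hdel_eq : {v : Fin N | v.1 < 3 * (p + 1) + 1} \ {c} =
      {v | v.1 + 1 < 3 * (p + 1) ∨ v.1 = 3 * (p + 1)} := by
    ext w
    simp only [mem_sdiff, mem_ofPred_eq, mem_singleton_iff, Fin.ext_iff, c]
    omega
  have hlk_eq : {v : Fin N | v.1 < 3 * (p + 1) + 1} \ closedNbhd (pathChordGraph N) c =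
      {v | v.1 + 1 < 3 * p ∨ v.1 = 3 * p} := by
    ext w
    simp only [mem_sdiff, mem_ofPred_eq, mem_closedNbhd_pathChordGraph, pathChordRel, c]
    omega
  refine .of_isSheddingOn (v := c) (by simp only [c, mem_ofPred_eq]; omega) ?_ (hdel_eq ▸ hdel)
    (hlk_eq ▸ hlk)
  refine isSheddingOn_of_nbhd_inter_subset (u := ⟨3 * p + 3, by omega⟩)
    (by simp only [mem_ofPred_eq]; omega)
    (by simp [c, pathChordRel]) ?_
  rintro z ⟨hz, hzA⟩
  simp only [nbhd, mem_ofPred_eq, pathChordGraph_adj, pathChordRel] at hz hzA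
  simp only [mem_closedNbhd_pathChordGraph, pathChordRel, c]
  omega

lemma vdWellCoveredOn_lt_or_eq_three_mul_add_five
    (hb : VDWellCoveredOn (pathChordGraph N) {v | v.1 < 3 * p + 2} (p + 1))
    (hlk : VDWellCoveredOn (pathChordGraph N) {v | v.1 + 1 < 3 * p ∨ v.1 = 3 * p} (p + 1))
    (hN : 3 * p + 6 ≤ N) :
    VDWellCoveredOn (pathChordGraph N) {v | v.1 < 3 * p + 3 ∨ v.1 = 3 * p + 5} (p + 1 + 1) := by
  set c : Fin N := ⟨3 * p + 2, by omega⟩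
  set d : Fin N := ⟨3 * p + 5, by omega⟩
  have hdel_eq : {v : Fin N | v.1 < 3 * p + 3 ∨ v.1 = 3 * p + 5} \ {c} =
      insert d {v | v.1 < 3 * p + 2} := by
    ext w
    simp only [mem_sdiff, mem_insert_iff, mem_ofPred_eq, mem_singleton_iff, Fin.ext_iff, c, d]
    omega
  have hlk_eq : {v : Fin N | v.1 < 3 * p + 3 ∨ v.1 = 3 * p + 5} \
      closedNbhd (pathChordGraph N) c = {v | v.1 + 1 < 3 * p ∨ v.1 = 3 * p} := by
    ext w
    simp only [mem_sdiff, mem_ofPred_eq, mem_closedNbhd_pathChordGraph, pathChordRel, c]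
    omega
  have hdel : VDWellCoveredOn (pathChordGraph N) (insert d {v | v.1 < 3 * p + 2}) (p + 1 + 1) := by
    refine hb.insert_of_isolated (by simp only [d, mem_ofPred_eq]; omega) fun u hu => ?_
    simp only [mem_ofPred_eq] at hu
    simp only [pathChordGraph_adj, pathChordRel, d]
    omega
  refine .of_isSheddingOn (v := c) (by simp only [c, mem_ofPred_eq]; omega) ?_ (hdel_eq ▸ hdel)
    (hlk_eq ▸ hlk)
  refine isSheddingOn_of_nbhd_inter_subset (u := d) (by simp [d])
    (by simp [c, d, pathChordRel]) ?_
  rintro z ⟨hz, hzA⟩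
  simp only [nbhd, mem_ofPred_eq, pathChordGraph_adj, pathChordRel, d] at hz hzA
  simp only [mem_closedNbhd_pathChordGraph, pathChordRel, c]
  omega

/-- If `3p + 2 ∈ S`, then `3p` can be added to `S`: its other neighbours are neighbours of
`3p + 2`. Otherwise `w` can. -/
lemma isSheddingOn_three_mul_add_four {A : Set (Fin N)} {x y w : Fin N}
    (hA : ∀ z ∈ A, z.1 < 3 * p + 6) (hx : x ∈ A) (hxv : x.1 = 3 * p) (hyv : y.1 = 3 * p + 4)
    (hw : w ∈ A) (hwv : w.1 = 3 * p + 3 ∨ w.1 = 3 * p + 5) :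
    IsSheddingOn (pathChordGraph N) A y := by
  refine isSheddingOn_of_forall_exists_addable fun S hS => ?_
  by_cases h : ∃ z ∈ S, z.1 = 3 * p + 2
  · obtain ⟨z₂, hz₂, hz₂v⟩ := h
    refine ⟨x, hx, by simp only [pathChordGraph_adj, pathChordRel]; omega, fun z hz hxz => ?_⟩
    refine hS.2 z hz z₂ hz₂ ?_
    have hzy := (hS.1 hz).2
    simp only [mem_closedNbhd_pathChordGraph, pathChordRel] at hzy
    simp only [pathChordGraph_adj, pathChordRel] at hxz ⊢
    omega
  · push Not at h
    refine ⟨w, hw, by simp only [pathChordGraph_adj, pathChordRel]; omega, fun z hz hwz => ?_⟩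
    have hzy := (hS.1 hz).2
    have hzA := hA z (hS.1 hz).1
    have hz₂ := h z hz
    simp only [mem_closedNbhd_pathChordGraph, pathChordRel] at hzy
    simp only [pathChordGraph_adj, pathChordRel] at hwz
    rcases hwv with hwv | hwv <;> omega

lemma vdWellCoveredOn_lt_three_mul_add_two
    (hdel : VDWellCoveredOn (pathChordGraph N) {v | v.1 < 3 * (p + 1) + 1} (p + 1 + 1))
    (hlk : VDWellCoveredOn (pathChordGraph N) {v | v.1 < 3 * p + 3 ∧ v.1 ≠ 3 * p} (p + 1))
    (hN : 3 * (p + 1) + 2 ≤ N) :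
    VDWellCoveredOn (pathChordGraph N) {v | v.1 < 3 * (p + 1) + 2} (p + 1 + 1) := by
  set y : Fin N := ⟨3 * p + 4, by omega⟩
  have hdel_eq : {v : Fin N | v.1 < 3 * (p + 1) + 2} \ {y} = {v | v.1 < 3 * (p + 1) + 1} := by
    ext w
    simp only [mem_sdiff, mem_ofPred_eq, mem_singleton_iff, Fin.ext_iff, y]
    omega
  have hlk_eq : {v : Fin N | v.1 < 3 * (p + 1) + 2} \ closedNbhd (pathChordGraph N) y =
      {v | v.1 < 3 * p + 3 ∧ v.1 ≠ 3 * p} := by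
    ext w
    simp only [mem_sdiff, mem_ofPred_eq, mem_closedNbhd_pathChordGraph, pathChordRel, y]
    omega
  refine .of_isSheddingOn (v := y) (by simp only [y, mem_ofPred_eq]; omega) ?_ (hdel_eq ▸ hdel)
    (hlk_eq ▸ hlk)
  exact isSheddingOn_three_mul_add_four (x := ⟨3 * p, by omega⟩) (w := ⟨3 * p + 3, by omega⟩)
    (fun z hz => by simp only [mem_ofPred_eq] at hz; omega) (by simp only [mem_ofPred_eq]; omega)
    rfl rfl (by simp only [mem_ofPred_eq]; omega) (Or.inl rfl)

lemma vdWellCoveredOn_lt_and_ne_three_mul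
    (hdel : VDWellCoveredOn (pathChordGraph N) {v | v.1 < 3 * p + 3 ∨ v.1 = 3 * p + 5}
      (p + 1 + 1))
    (hlk : VDWellCoveredOn (pathChordGraph N) {v | v.1 < 3 * p + 3 ∧ v.1 ≠ 3 * p} (p + 1))
    (hN : 3 * (p + 1) + 3 ≤ N) :
    VDWellCoveredOn (pathChordGraph N) {v | v.1 < 3 * (p + 1) + 3 ∧ v.1 ≠ 3 * (p + 1)}
      (p + 1 + 1) := by
  set y : Fin N := ⟨3 * p + 4, by omega⟩
  have hdel_eq : {v : Fin N | v.1 < 3 * (p + 1) + 3 ∧ v.1 ≠ 3 * (p + 1)} \ {y} =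
      {v | v.1 < 3 * p + 3 ∨ v.1 = 3 * p + 5} := by
    ext w
    simp only [mem_sdiff, mem_ofPred_eq, mem_singleton_iff, Fin.ext_iff, y]
    omega
  have hlk_eq : {v : Fin N | v.1 < 3 * (p + 1) + 3 ∧ v.1 ≠ 3 * (p + 1)} \
      closedNbhd (pathChordGraph N) y = {v | v.1 < 3 * p + 3 ∧ v.1 ≠ 3 * p} := by
    ext w
    simp only [mem_sdiff, mem_ofPred_eq, mem_closedNbhd_pathChordGraph, pathChordRel, y]
    omega
  refine .of_isSheddingOn (v := y) (by simp only [y, mem_ofPred_eq]; omega) ?_ (hdel_eq ▸ hdel)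
    (hlk_eq ▸ hlk)
  exact isSheddingOn_three_mul_add_four (x := ⟨3 * p, by omega⟩) (w := ⟨3 * p + 5, by omega⟩)
    (fun z hz => by simp only [mem_ofPred_eq] at hz; omega) (by simp only [mem_ofPred_eq]; omega)
    rfl rfl (by simp only [mem_ofPred_eq]; omega) (Or.inr rfl)

lemma vdWellCoveredOn_three_families (p : ℕ) :
    (3 * p + 2 ≤ N →
      VDWellCoveredOn (pathChordGraph N) {v | v.1 < 3 * p + 2} (p + 1)) ∧
    (3 * p + 1 ≤ N →
      VDWellCoveredOn (pathChordGraph N) {v | v.1 + 1 < 3 * p ∨ v.1 = 3 * p} (p + 1)) ∧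
    (3 * p + 3 ≤ N →
      VDWellCoveredOn (pathChordGraph N) {v | v.1 < 3 * p + 3 ∧ v.1 ≠ 3 * p} (p + 1)) := by
  induction p with
  | zero =>
    refine ⟨fun hN => ?_, fun hN => ?_, fun hN => ?_⟩
    · convert VDWellCoveredOn.pair (G := pathChordGraph N) (a := ⟨0, by omega⟩) (b := ⟨1, by omega⟩)
        (by simp [pathChordRel])
      ext w
      simp only [mem_ofPred_eq, mem_insert_iff, mem_singleton_iff, Fin.ext_iff]
      omega
    · convert VDWellCoveredOn.singleton (G := pathChordGraph N) (⟨0, by omega⟩ : Fin N)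
      ext w
      simp only [mem_ofPred_eq, mem_singleton_iff, Fin.ext_iff]
      omega
    · convert VDWellCoveredOn.pair (G := pathChordGraph N) (a := ⟨1, by omega⟩) (b := ⟨2, by omega⟩)
        (by simp [pathChordRel])
      ext w
      simp only [mem_ofPred_eq, mem_insert_iff, mem_singleton_iff, Fin.ext_iff]
      omega
  | succ p ih =>
    obtain ⟨hb, he, hc⟩ := ih
    have he' (hN : 3 * (p + 1) + 1 ≤ N) := vdWellCoveredOn_lt_or_eq_three_mul (hb (by omega)) hN
    refine ⟨fun hN => ?_, he', fun hN => ?_⟩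
    · exact vdWellCoveredOn_lt_three_mul_add_two
        (vdWellCoveredOn_lt_three_mul_add_one (he' (by omega)) (he (by omega)) (by omega))
        (hc (by omega)) hN
    · exact vdWellCoveredOn_lt_and_ne_three_mul
        (vdWellCoveredOn_lt_or_eq_three_mul_add_five (hb (by omega)) (he (by omega)) (by omega))
        (hc (by omega)) hN

lemma vdWellCoveredOn_univ (hN : N = 3 * p + 1 ∨ N = 3 * p + 2) :
    VDWellCoveredOn (pathChordGraph N) univ (p + 1) := by
  have huniv (m : ℕ) (hm : N ≤ m) : (univ : Set (Fin N)) = {v | v.1 < m} :=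
    (eq_univ_of_forall fun v => lt_of_lt_of_le v.isLt hm).symm
  rcases hN with hN | hN
  · cases p with
    | zero =>
      convert (vdWellCoveredOn_three_families (N := N) 0).2.1 (by omega)
      ext w
      simp only [mem_univ, mem_ofPred_eq, true_iff]
      have := w.isLt
      omega
    | succ p =>
      have h := vdWellCoveredOn_three_families (N := N)
      rw [huniv _ hN.le]
      exact vdWellCoveredOn_lt_three_mul_add_one ((h (p + 1)).2.1 (by omega)) ((h p).2.1 (by omega))
        (by omega)
  · rw [huniv _ hN.le]
    exact (vdWellCoveredOn_three_families p).1 (by omega)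

end PathChordGraph

/-- For every integer `n ≥ 1`, the graphs `G_n` and `H_n` are
well-covered and vertex decomposable, with `α(G_n) = α(H_n) = n`. -/
theorem stmt11 (n : ℕ) (hn : 1 ≤ n) :
    (WellCovered (Gn n) ∧ VertexDecomposable (Gn n) ∧ _root_.indepNum (Gn n) = n) ∧
    (WellCovered (Hn n) ∧ VertexDecomposable (Hn n) ∧ _root_.indepNum (Hn n) = n) := by
  obtain ⟨p, rfl⟩ : ∃ p, n = p + 1 := ⟨n - 1, by omega⟩
  have hG := vdWellCoveredOn_univ (N := 3 * (p + 1) - 1) (p := p) (Or.inr (by omega))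
  have hH := vdWellCoveredOn_univ (N := 3 * (p + 1) - 2) (p := p) (Or.inl (by omega))
  rw [Gn_eq_pathChordGraph, Hn_eq_pathChordGraph]
  exact ⟨⟨hG.2.wellCovered, hG.1, hG.2.indepNum_eq⟩, ⟨hH.2.wellCovered, hH.1, hH.2.indepNum_eq⟩⟩
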